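/- arXiv:1912.10332 — 5 statements merged into one kernel-verified Lean document; each statement's English description precedes it below -/
import Mathlib

section
/- Let 𝒜 be an infinite independent family of subsets of ω. Then the following are equivalent: (1) for every X ⊆ ω with X ∉ 𝒜 and every h ∈ FF(𝒜) there is h' ∈ FF(𝒜) extending h such that 𝒜^{h'} ∩ X is finite or 𝒜^{h'} ∖ X is finite; (2) for every h ∈ FF(𝒜) and every X ⊆ 𝒜^h, either there is B ∈ id(𝒜) such that 𝒜^h ∖ X ⊆ B, or there is h' ∈ FF(𝒜) extending h with 𝒜^{h'} ⊆ 𝒜^h ∖ X. -/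
/-- `FF 𝒜`: finite partial functions from `𝒜` to `{0,1}` (modelled as
`Set ℕ → Option Bool`) with finite non-empty domain contained in `𝒜`. -/
def FF (𝒜 : Set (Set ℕ)) : Set (Set ℕ → Option Bool) :=
  {h | {A | h A ≠ none}.Finite ∧ {A | h A ≠ none}.Nonempty ∧ {A | h A ≠ none} ⊆ 𝒜}

/-- `h'` extends `h` as partial functions. -/
def PFunExtends (h h' : Set ℕ → Option Bool) : Prop :=
  ∀ (A : Set ℕ) (b : Bool), h A = some b → h' A = some b

/-- The boolean combination `𝒜^h`. -/
def comb (h : Set ℕ → Option Bool) : Set ℕ :=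
  {n | ∀ A : Set ℕ, (h A = some true → n ∈ A) ∧ (h A = some false → n ∉ A)}

/-- `𝒜` is an independent family: all members are infinite, and for all
disjoint finite non-empty subfamilies `B`, `C` of `𝒜`,
`(⋂ B) \ (⋃ C)` is infinite. -/
def IndepFamily (𝒜 : Set (Set ℕ)) : Prop :=
  (∀ A ∈ 𝒜, A.Infinite) ∧
  ∀ B C : Finset (Set ℕ), ↑B ⊆ 𝒜 → ↑C ⊆ 𝒜 → B.Nonempty → C.Nonempty →
    Disjoint B C →
      ((⋂ A ∈ (B : Set (Set ℕ)), A) \ (⋃ A ∈ (C : Set (Set ℕ)), A)).Infinite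

/-- The density ideal `id(𝒜)`. -/
def densityIdeal (𝒜 : Set (Set ℕ)) : Set (Set ℕ) :=
  {X | ∀ h ∈ FF 𝒜, ∃ h' ∈ FF 𝒜, PFunExtends h h' ∧ comb h' ∩ X = ∅}

/-- The density filter `fil(𝒜)`. -/
def densityFilter (𝒜 : Set (Set ℕ)) : Set (Set ℕ) :=
  {Y | ∀ h ∈ FF 𝒜, ∃ h' ∈ FF 𝒜, PFunExtends h h' ∧ comb h' ⊆ Y}

/-- `𝒜` is densely maximal. -/
def DenselyMaximal (𝒜 : Set (Set ℕ)) : Prop :=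
  ∀ X : Set ℕ, X ∉ 𝒜 → ∀ h ∈ FF 𝒜, ∃ h' ∈ FF 𝒜, PFunExtends h h' ∧
    ((comb h' ∩ X).Finite ∨ (comb h' \ X).Finite)

/-- `F` is a p-set. -/
def IsPSet (F : Set (Set ℕ)) : Prop :=
  ∀ F0 ⊆ F, F0.Countable → ∃ C ∈ F, ∀ X ∈ F0, (C \ X).Finite

/-- A partition of `ω` into finite sets. -/
def IsFinPartition (E : Set (Set ℕ)) : Prop :=
  (∀ e ∈ E, e.Finite) ∧ ⋃₀ E = Set.univ ∧ E.PairwiseDisjoint (id : Set ℕ → Set ℕ)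

/-- `F` is a q-set: every partition of `ω` into finite sets has a
semi-selector in `F`. -/
def IsQSet (F : Set (Set ℕ)) : Prop :=
  ∀ E : Set (Set ℕ), IsFinPartition E → ∃ C ∈ F, ∀ e ∈ E, (e ∩ C).Subsingleton

/-- A selective independent family. -/
def Selective (𝒜 : Set (Set ℕ)) : Prop :=
  IndepFamily 𝒜 ∧ DenselyMaximal 𝒜 ∧
    IsPSet (densityFilter 𝒜) ∧ IsQSet (densityFilter 𝒜)

/-- The boolean combination `ℬ^t` along an enumeration `B` of a countable
family, for a finite binary string `t`. -/
def strComb (B : ℕ → Set ℕ) (t : List Bool) : Set ℕ :=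
  {m | ∀ i : Fin t.length, (t.get i = true → m ∈ B i) ∧ (t.get i = false → m ∉ B i)}

/-- `K ⊆ 2^{<ω}` is dense: every string has an (end-)extension in `K`. -/
def DenseStrings (K : Set (List Bool)) : Prop :=
  ∀ s : List Bool, ∃ t ∈ K, s <+: t

/-!
For `(1) → (2)`, let `Y = 𝒜^h \ X`. If no extension of `h` has its combination inside `Y`, then `Y`
lies in `id(𝒜)`: a condition `g` incompatible with `h` already misses `𝒜^h ⊇ Y`, and a common
extension of `g` and `h` can, by `(1)`, be extended further so that its combination meets `Y`
or `ω \ Y` only finitely; since `𝒜` is infinite, finitely many points can be removed from a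
combination by deciding fresh members of `𝒜`, and the second alternative is excluded by
assumption. (If `Y ∈ 𝒜`, deciding `Y` itself shows that `Y` must be empty.)
For `(2) → (1)`, apply `(2)` to `𝒜^h \ X`.
-/

theorem PFunExtends.refl (h : Set ℕ → Option Bool) : PFunExtends h h :=
  fun _ _ hb => hb

theorem PFunExtends.trans {h₁ h₂ h₃ : Set ℕ → Option Bool}
    (h₁₂ : PFunExtends h₁ h₂) (h₂₃ : PFunExtends h₂ h₃) : PFunExtends h₁ h₃ :=
  fun A b hb => h₂₃ A b (h₁₂ A b hb)

theorem PFunExtends.comb_subset {h h' : Set ℕ → Option Bool} (he : PFunExtends h h') :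
    comb h' ⊆ comb h :=
  fun _ hn A => ⟨fun hA => (hn A).1 (he A true hA), fun hA => (hn A).2 (he A false hA)⟩

theorem mem_iff_of_mem_comb {h : Set ℕ → Option Bool} {A : Set ℕ} {b : Bool} {n : ℕ}
    (hA : h A = some b) (hn : n ∈ comb h) : n ∈ A ↔ b = true := by
  cases b
  · simpa using (hn A).2 hA
  · simpa using (hn A).1 hA

theorem empty_mem_densityIdeal (𝒜 : Set (Set ℕ)) : ∅ ∈ densityIdeal 𝒜 :=
  fun h hh => ⟨h, hh, PFunExtends.refl h, Set.inter_empty _⟩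

section Extensions

variable {𝒜 : Set (Set ℕ)} {h : Set ℕ → Option Bool}

theorem exists_extends_eq_some (hh : h ∈ FF 𝒜) {A : Set ℕ} (hA : A ∈ 𝒜) {b : Bool}
    (hb : ∀ c, h A = some c → c = b) :
    ∃ h' ∈ FF 𝒜, PFunExtends h h' ∧ h' A = some b := by
  classical
  have hdom : {B | Function.update h A (some b) B ≠ none} ⊆ insert A {B | h B ≠ none} := by
    intro B hB
    by_cases hBA : B = A
    · exact Or.inl hBA
    · exact Or.inr (by simpa [Function.update_of_ne hBA] using hB)
  refine ⟨Function.update h A (some b),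
    ⟨(hh.1.insert A).subset hdom, ⟨A, by simp⟩, fun B hB => ?_⟩, fun B c hc => ?_, by simp⟩
  · rcases hdom hB with rfl | hB
    exacts [hA, hh.2.2 hB]
  · by_cases hBA : B = A
    · subst hBA
      simp [hb c hc]
    · simpa [Function.update_of_ne hBA] using hc

theorem exists_extends_comb_subset_of_mem (hh : h ∈ FF 𝒜) {A : Set ℕ} (hA : A ∈ 𝒜)
    (hAh : A ⊆ comb h) (hAne : A.Nonempty) :
    ∃ h' ∈ FF 𝒜, PFunExtends h h' ∧ comb h' ⊆ A := by
  obtain ⟨a, ha⟩ := hAne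
  obtain ⟨h', hh', he, hA'⟩ := exists_extends_eq_some hh hA (b := true)
    fun c hc => (mem_iff_of_mem_comb hc (hAh ha)).mp ha
  exact ⟨h', hh', he, fun n hn => (mem_iff_of_mem_comb hA' hn).mpr rfl⟩

theorem exists_extends_not_mem_comb (hinf : 𝒜.Infinite) (hh : h ∈ FF 𝒜) (n : ℕ) :
    ∃ h' ∈ FF 𝒜, PFunExtends h h' ∧ n ∉ comb h' := by
  classical
  obtain ⟨A, hA, hAh⟩ := (hinf.sdiff hh.1).nonempty
  replace hAh : h A = none := by simpa using hAh
  obtain ⟨h', hh', he, hA'⟩ := exists_extends_eq_some hh hA (b := decide (n ∉ A))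
    fun c hc => by simp [hAh] at hc
  refine ⟨h', hh', he, fun hn => ?_⟩
  have hnA := mem_iff_of_mem_comb hA' hn
  rw [decide_eq_true_iff] at hnA
  exact iff_not_self hnA

theorem exists_extends_disjoint_comb_of_finite (hinf : 𝒜.Infinite) {F : Set ℕ}
    (hF : F.Finite) : ∀ h ∈ FF 𝒜, ∃ h' ∈ FF 𝒜, PFunExtends h h' ∧ Disjoint (comb h') F := by
  induction F, hF using Set.Finite.induction_on with
  | empty => exact fun h hh => ⟨h, hh, PFunExtends.refl h, Set.disjoint_empty _⟩
  | @insert n F _ _ ih =>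
    intro h hh
    obtain ⟨h₁, hh₁, he₁, hF₁⟩ := ih h hh
    obtain ⟨h₂, hh₂, he₂, hn₂⟩ := exists_extends_not_mem_comb hinf hh₁ n
    exact ⟨h₂, hh₂, he₁.trans he₂,
      Set.disjoint_insert_right.mpr ⟨hn₂, hF₁.mono_left he₂.comb_subset⟩⟩

theorem exists_extends_disjoint_or_comb_subset (hinf : 𝒜.Infinite) (hh : h ∈ FF 𝒜)
    {X : Set ℕ} (hX : (comb h ∩ X).Finite ∨ (comb h \ X).Finite) :
    ∃ h' ∈ FF 𝒜, PFunExtends h h' ∧ (Disjoint (comb h') X ∨ comb h' ⊆ X) := by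
  rcases hX with hX | hX
  · obtain ⟨h', hh', he, hd⟩ := exists_extends_disjoint_comb_of_finite hinf hX h hh
    refine ⟨h', hh', he, Or.inl (Set.disjoint_left.mpr fun n hn hnX => ?_)⟩
    exact Set.disjoint_left.mp hd hn ⟨he.comb_subset hn, hnX⟩
  · obtain ⟨h', hh', he, hd⟩ := exists_extends_disjoint_comb_of_finite hinf hX h hh
    refine ⟨h', hh', he, Or.inr fun n hn => ?_⟩
    by_contra hnX
    exact Set.disjoint_left.mp hd hn ⟨he.comb_subset hn, hnX⟩

theorem exists_common_extension_or_disjoint_comb {g : Set ℕ → Option Bool}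
    (hg : g ∈ FF 𝒜) (hh : h ∈ FF 𝒜) :
    (∃ k ∈ FF 𝒜, PFunExtends g k ∧ PFunExtends h k) ∨ Disjoint (comb g) (comb h) := by
  by_cases hcomp : ∀ A b c, g A = some b → h A = some c → b = c
  · left
    have hdom : {A | (g A).or (h A) ≠ none} ⊆ {A | g A ≠ none} ∪ {A | h A ≠ none} := by
      intro A hA
      by_contra hA'
      simp_all [Option.or_eq_none_iff]
    refine ⟨fun A => (g A).or (h A), ⟨(hg.1.union hh.1).subset hdom, ?_, ?_⟩, ?_, ?_⟩
    · obtain ⟨A, hA⟩ := hg.2.1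
      exact ⟨A, by simp_all [Option.or_eq_none_iff]⟩
    · intro A hA
      rcases hdom hA with hA | hA
      exacts [hg.2.2 hA, hh.2.2 hA]
    · intro A b hb
      simp [hb]
    · intro A c hc
      rcases hgA : g A with _ | b
      · simp [hgA, hc]
      · simp [hgA, hcomp A b c hgA hc]
  · right
    push Not at hcomp
    obtain ⟨A, b, c, hgA, hhA, hbc⟩ := hcomp
    refine Set.disjoint_left.mpr fun n hng hnh => hbc ?_
    have := (mem_iff_of_mem_comb hgA hng).symm.trans (mem_iff_of_mem_comb hhA hnh)
    cases b <;> cases c <;> simp_all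

theorem eq_empty_of_mem_of_forall_not_comb_subset (hh : h ∈ FF 𝒜) {Y : Set ℕ} (hY : Y ∈ 𝒜) (hYh : Y ⊆ comb h)
    (hsec : ¬ ∃ h' ∈ FF 𝒜, PFunExtends h h' ∧ comb h' ⊆ Y) : Y = ∅ :=
  Set.not_nonempty_iff_eq_empty.mp fun hne =>
    hsec (exists_extends_comb_subset_of_mem hh hY hYh hne)

theorem mem_densityIdeal_of_forall_not_comb_subset (hinf : 𝒜.Infinite)
    {Y : Set ℕ} (hdm : ∀ g ∈ FF 𝒜, ∃ g' ∈ FF 𝒜, PFunExtends g g' ∧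
        ((comb g' ∩ Y).Finite ∨ (comb g' \ Y).Finite))
    (hh : h ∈ FF 𝒜) (hYh : Y ⊆ comb h)
    (hsec : ¬ ∃ h' ∈ FF 𝒜, PFunExtends h h' ∧ comb h' ⊆ Y) : Y ∈ densityIdeal 𝒜 := by
  intro g hg
  rcases exists_common_extension_or_disjoint_comb hg hh with ⟨k, hk, hgk, hhk⟩ | hd
  · obtain ⟨k₁, hk₁, he₁, hfin⟩ := hdm k hk
    obtain ⟨k₂, hk₂, he₂, hk₂Y | hk₂Y⟩ := exists_extends_disjoint_or_comb_subset hinf hk₁ hfin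
    · exact ⟨k₂, hk₂, (hgk.trans he₁).trans he₂, Set.disjoint_iff_inter_eq_empty.mp hk₂Y⟩
    · exact absurd ⟨k₂, hk₂, (hhk.trans he₁).trans he₂, hk₂Y⟩ hsec
  · exact ⟨g, hg, PFunExtends.refl g, Set.disjoint_iff_inter_eq_empty.mp (hd.mono_right hYh)⟩

end Extensions

theorem stmt_0_general (𝒜 : Set (Set ℕ)) (hinf : 𝒜.Infinite) :
    (∀ X : Set ℕ, X ∉ 𝒜 → ∀ h ∈ FF 𝒜, ∃ h' ∈ FF 𝒜, PFunExtends h h' ∧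
        ((comb h' ∩ X).Finite ∨ (comb h' \ X).Finite)) ↔
    (∀ h ∈ FF 𝒜, ∀ X ⊆ comb h,
        (∃ B ∈ densityIdeal 𝒜, comb h \ X ⊆ B) ∨
        (∃ h' ∈ FF 𝒜, PFunExtends h h' ∧ comb h' ⊆ comb h \ X)) := by
  constructor
  · intro hdm h hh X _
    by_cases hsec : ∃ h' ∈ FF 𝒜, PFunExtends h h' ∧ comb h' ⊆ comb h \ X
    · exact Or.inr hsec
    refine Or.inl ⟨comb h \ X, ?_, subset_rfl⟩
    by_cases hY : comb h \ X ∈ 𝒜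
    · rw [eq_empty_of_mem_of_forall_not_comb_subset hh hY Set.sdiff_subset hsec]
      exact empty_mem_densityIdeal 𝒜
    · exact mem_densityIdeal_of_forall_not_comb_subset hinf (hdm _ hY) hh Set.sdiff_subset hsec
  · intro H X _ h hh
    rcases H h hh (comb h \ X) Set.sdiff_subset with ⟨B, hB, hBX⟩ | ⟨h', hh', he, hsub⟩
    · obtain ⟨h', hh', he, hd⟩ := hB h hh
      refine ⟨h', hh', he, Or.inl (Set.Finite.subset Set.finite_empty fun n ⟨hn, hnX⟩ => ?_)⟩
      rw [← hd]
      exact ⟨hn, hBX ⟨he.comb_subset hn, fun hn' => hn'.2 hnX⟩⟩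
    · refine ⟨h', hh', he, Or.inr (Set.Finite.subset Set.finite_empty fun n ⟨hn, hnX⟩ => ?_)⟩
      exact (hsub hn).2 ⟨(hsub hn).1, hnX⟩

theorem stmt_0 (𝒜 : Set (Set ℕ)) (hinf : 𝒜.Infinite) (hind : IndepFamily 𝒜) :
    (∀ X : Set ℕ, X ∉ 𝒜 → ∀ h ∈ FF 𝒜, ∃ h' ∈ FF 𝒜, PFunExtends h h' ∧
        ((comb h' ∩ X).Finite ∨ (comb h' \ X).Finite)) ↔
    (∀ h ∈ FF 𝒜, ∀ X ⊆ comb h,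
        (∃ B ∈ densityIdeal 𝒜, comb h \ X ⊆ B) ∨
        (∃ h' ∈ FF 𝒜, PFunExtends h h' ∧ comb h' ⊆ comb h \ X)) :=
  stmt_0_general 𝒜 hinf
end

section
/- Let 𝒜 be an infinite independent family of subsets of ω and let X ∈ id(𝒜). Then there exists a countably infinite subfamily ℬ ⊆ 𝒜 such that X ∈ id(ℬ). -/
lemma FF_mono {S T : Set (Set ℕ)} (hST : S ⊆ T) : FF S ⊆ FF T :=
  fun _ ⟨hfin, hne, hsub⟩ => ⟨hfin, hne, hsub.trans hST⟩

-- A partial function is determined by its graph, a finite subset of `S × Bool`.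
lemma FF_countable {S : Set (Set ℕ)} (hS : S.Countable) : (FF S).Countable := by
  let graph (h : Set ℕ → Option Bool) : Set (Set ℕ × Bool) := {p | h p.1 = some p.2}
  have hgraph_dom : ∀ h, graph h ⊆ {A | h A ≠ none} ×ˢ Set.univ := by
    rintro h ⟨A, b⟩ (hp : h A = some b)
    exact ⟨by simp [hp], trivial⟩
  refine Set.MapsTo.countable_of_injOn (f := graph) ?_ ?_
    (Set.countable_ofPred_finite_subset (hS.prod Set.countable_univ))
  · rintro h ⟨hfin, -, hsub⟩
    exact ⟨(hfin.prod Set.finite_univ).subset (hgraph_dom h),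
      (hgraph_dom h).trans (Set.prod_mono hsub le_rfl)⟩
  · intro h₁ _ h₂ _ hgr
    funext A
    exact Option.ext fun b => Set.ext_iff.mp hgr (A, b)

lemma exists_mem_FF_of_mem_FF_iUnion {ℬ : ℕ → Set (Set ℕ)} (hmono : Monotone ℬ)
    {h : Set ℕ → Option Bool} (hh : h ∈ FF (⋃ n, ℬ n)) : ∃ n, h ∈ FF (ℬ n) := by
  obtain ⟨hfin, hne, hsub⟩ := hh
  obtain ⟨n, hn⟩ := hmono.directed_le.exists_mem_subset_of_finset_subset_biUnion
    (s := hfin.toFinset) (by simpa using hsub)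
  exact ⟨n, hfin, hne, by simpa using hn⟩

def witnessClosure (w : (Set ℕ → Option Bool) → Set ℕ → Option Bool) (ℬ₀ : Set (Set ℕ)) :
    ℕ → Set (Set ℕ)
  | 0 => ℬ₀
  | n + 1 => witnessClosure w ℬ₀ n ∪ ⋃ h ∈ FF (witnessClosure w ℬ₀ n), {A | w h A ≠ none}

section witnessClosure

variable {w : (Set ℕ → Option Bool) → Set ℕ → Option Bool} {𝒜 ℬ₀ : Set (Set ℕ)}

lemma witnessClosure_monotone : Monotone (witnessClosure w ℬ₀) :=
  monotone_nat_of_le_succ fun _ => Set.subset_union_left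

lemma witness_dom_subset_witnessClosure_succ {n : ℕ} {h : Set ℕ → Option Bool}
    (hh : h ∈ FF (witnessClosure w ℬ₀ n)) : {A | w h A ≠ none} ⊆ witnessClosure w ℬ₀ (n + 1) :=
  (Set.subset_biUnion_of_mem (u := fun h => {A | w h A ≠ none}) hh).trans Set.subset_union_right

variable (hw : ∀ h ∈ FF 𝒜, w h ∈ FF 𝒜) (hℬ₀ : ℬ₀ ⊆ 𝒜)
include hw hℬ₀

lemma witnessClosure_subset (n : ℕ) : witnessClosure w ℬ₀ n ⊆ 𝒜 := by
  induction n with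
  | zero => exact hℬ₀
  | succ n ih =>
    exact Set.union_subset ih <| Set.iUnion₂_subset fun h hh => (hw h (FF_mono ih hh)).2.2

lemma witnessClosure_countable (hc : ℬ₀.Countable) (n : ℕ) :
    (witnessClosure w ℬ₀ n).Countable := by
  induction n with
  | zero => exact hc
  | succ n ih =>
    refine ih.union <| (FF_countable ih).biUnion fun h hh => ?_
    exact (hw h (FF_mono (witnessClosure_subset hw hℬ₀ n) hh)).1.countable

end witnessClosure

theorem exists_countable_subfamily_dense (P : (Set ℕ → Option Bool) → Prop)
    {𝒜 ℬ₀ : Set (Set ℕ)} (hdense : ∀ h ∈ FF 𝒜, ∃ h' ∈ FF 𝒜, PFunExtends h h' ∧ P h')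
    (hℬ₀ : ℬ₀ ⊆ 𝒜) (hc : ℬ₀.Countable) :
    ∃ ℬ, ℬ₀ ⊆ ℬ ∧ ℬ ⊆ 𝒜 ∧ ℬ.Countable ∧
      ∀ h ∈ FF ℬ, ∃ h' ∈ FF ℬ, PFunExtends h h' ∧ P h' := by
  choose! w hwFF hwext hwP using hdense
  refine ⟨⋃ n, witnessClosure w ℬ₀ n, Set.subset_iUnion (witnessClosure w ℬ₀) 0,
    Set.iUnion_subset (witnessClosure_subset hwFF hℬ₀),
    Set.countable_iUnion (witnessClosure_countable hwFF hℬ₀ hc), fun h hh => ?_⟩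
  obtain ⟨n, hn⟩ := exists_mem_FF_of_mem_FF_iUnion witnessClosure_monotone hh
  have hh𝒜 : h ∈ FF 𝒜 := FF_mono (witnessClosure_subset hwFF hℬ₀ n) hn
  obtain ⟨hfin, hne, -⟩ := hwFF h hh𝒜
  exact ⟨w h, ⟨hfin, hne, (witness_dom_subset_witnessClosure_succ hn).trans (Set.subset_iUnion _ _)⟩,
    hwext h hh𝒜, hwP h hh𝒜⟩

theorem stmt_8_general (𝒜 : Set (Set ℕ)) (hinf : 𝒜.Infinite)
    (X : Set ℕ) (hX : X ∈ densityIdeal 𝒜) :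
    ∃ ℬ ⊆ 𝒜, ℬ.Countable ∧ ℬ.Infinite ∧ X ∈ densityIdeal ℬ := by
  obtain ⟨ℬ₀, hℬ₀, hℬ₀c, hℬ₀inf⟩ := hinf.exists_subset_countable_infinite
  obtain ⟨ℬ, hsup, hsub, hc, hdense⟩ := exists_countable_subfamily_dense _ hX hℬ₀ hℬ₀c
  exact ⟨ℬ, hsub, hc, hℬ₀inf.mono hsup, hdense⟩

theorem stmt_8 (𝒜 : Set (Set ℕ)) (hinf : 𝒜.Infinite) (hind : IndepFamily 𝒜)
    (X : Set ℕ) (hX : X ∈ densityIdeal 𝒜) :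
    ∃ ℬ ⊆ 𝒜, ℬ.Countable ∧ ℬ.Infinite ∧ X ∈ densityIdeal ℬ :=
  stmt_8_general 𝒜 hinf X hX
end

section
/- If 𝒜 is an infinite independent family of subsets of ω which is densely maximal, then 𝒜 is maximal independent, i.e. no independent family of infinite subsets of ω properly contains 𝒜. -/
lemma FF_mono_s11 {𝒜 𝒜' : Set (Set ℕ)} (h : 𝒜 ⊆ 𝒜') : FF 𝒜 ⊆ FF 𝒜' :=
  fun _ ⟨hfin, hne, hsub⟩ => ⟨hfin, hne, hsub.trans h⟩

open Classical in
lemma FF_nonempty {𝒜 : Set (Set ℕ)} (h : 𝒜.Nonempty) : (FF 𝒜).Nonempty := by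
  obtain ⟨A, hA⟩ := h
  have hdom : {B | (if B = A then some true else none) ≠ none} = {A} := by
    ext B; by_cases hB : B = A <;> simp [hB]
  refine ⟨fun B => if B = A then some true else none, ?_⟩
  simp only [FF, Set.mem_ofPred_eq, hdom]
  exact ⟨Set.finite_singleton A, Set.singleton_nonempty A, Set.singleton_subset_iff.2 hA⟩

lemma comb_eq_biInter_sdiff_biUnion (h : Set ℕ → Option Bool) :
    comb h = (⋂ A ∈ {A | h A = some true}, A) \ ⋃ A ∈ {A | h A = some false}, A := by
  ext n
  simp only [comb, Set.mem_ofPred_eq, Set.mem_sdiff, Set.mem_iInter, Set.mem_iUnion, exists_prop,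
    not_exists, not_and]
  exact ⟨fun hn => ⟨fun A => (hn A).1, fun A => (hn A).2⟩, fun hn A => ⟨hn.1 A, hn.2 A⟩⟩

/-- For an infinite family the non-emptiness conditions of `IndepFamily` can be dropped:
add a fresh member of the family to each of `B` and `C`. -/
theorem IndepFamily.infinite_biInter_sdiff_biUnion {𝒜 : Set (Set ℕ)} (h𝒜 : IndepFamily 𝒜)
    (hinf : 𝒜.Infinite) {B C : Set (Set ℕ)} (hBf : B.Finite) (hCf : C.Finite) (hB : B ⊆ 𝒜)
    (hC : C ⊆ 𝒜) (hBC : Disjoint B C) : ((⋂ A ∈ B, A) \ ⋃ A ∈ C, A).Infinite := by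
  classical
  obtain ⟨A₁, hA₁𝒜, hA₁⟩ := (hinf.sdiff (hBf.union hCf)).nonempty
  obtain ⟨A₂, ⟨hA₂𝒜, hA₂⟩, hA₂₁⟩ :=
    ((hinf.sdiff (hBf.union hCf)).sdiff (Set.finite_singleton A₁)).nonempty
  have key := h𝒜.2 (hBf.insert A₁).toFinset (hCf.insert A₂).toFinset
    (by simpa using Set.insert_subset hA₁𝒜 hB) (by simpa using Set.insert_subset hA₂𝒜 hC)
    (by simp) (by simp) (by
      rw [← Finset.disjoint_coe]
      simp only [Set.Finite.coe_toFinset, Set.disjoint_insert_left, Set.disjoint_insert_right,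
        Set.mem_insert_iff, not_or]
      grind)
  simp only [Set.Finite.coe_toFinset] at key
  refine key.mono (Set.sdiff_subset_sdiff ?_ ?_)
  · exact Set.biInter_mono (Set.subset_insert _ _) fun _ _ => le_rfl
  · exact Set.biUnion_mono (Set.subset_insert _ _) fun _ _ => le_rfl

theorem IndepFamily.infinite_comb_inter_and_sdiff {𝒜 : Set (Set ℕ)} (h𝒜 : IndepFamily 𝒜)
    (hinf : 𝒜.Infinite) {h : Set ℕ → Option Bool} (hh : h ∈ FF 𝒜) {X : Set ℕ} (hX : X ∈ 𝒜)
    (hXh : h X = none) : (comb h ∩ X).Infinite ∧ (comb h \ X).Infinite := by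
  obtain ⟨hfin, -, hsub⟩ := hh
  have hTf : {A | h A = some true}.Finite := hfin.subset fun A hA => by simp_all
  have hFf : {A | h A = some false}.Finite := hfin.subset fun A hA => by simp_all
  have hT : {A | h A = some true} ⊆ 𝒜 := fun A hA => hsub (by simp_all)
  have hF : {A | h A = some false} ⊆ 𝒜 := fun A hA => hsub (by simp_all)
  have hTF : Disjoint {A | h A = some true} {A | h A = some false} :=
    Set.disjoint_left.2 fun A hA hA' => by simp_all
  rw [comb_eq_biInter_sdiff_biUnion]
  constructor
  · have := h𝒜.infinite_biInter_sdiff_biUnion hinf (hTf.insert X) hFf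
      (Set.insert_subset hX hT) hF
      (Set.disjoint_insert_left.2 ⟨by simp [hXh], hTF⟩)
    rwa [Set.biInter_insert, Set.inter_sdiff_assoc, Set.inter_comm] at this
  · have := h𝒜.infinite_biInter_sdiff_biUnion hinf hTf (hFf.insert X) hT
      (Set.insert_subset hX hF)
      (Set.disjoint_insert_right.2 ⟨by simp [hXh], hTF⟩)
    rwa [Set.biUnion_insert, Set.union_comm, ← Set.sdiff_sdiff] at this

theorem stmt_11_general (𝒜 : Set (Set ℕ)) (hinf : 𝒜.Infinite)
    (hdm : DenselyMaximal 𝒜) :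
    ¬ ∃ 𝒜' : Set (Set ℕ), IndepFamily 𝒜' ∧ 𝒜 ⊂ 𝒜' := by
  rintro ⟨𝒜', hind', h𝒜𝒜'⟩
  obtain ⟨X, hX𝒜', hX𝒜⟩ := Set.exists_of_ssubset h𝒜𝒜'
  obtain ⟨h, hh⟩ := FF_nonempty hinf.nonempty
  obtain ⟨h', hh', -, hfin⟩ := hdm X hX𝒜 h hh
  have hXh' : h' X = none := by_contra fun hX => hX𝒜 (hh'.2.2 hX)
  obtain ⟨hinter, hdiff⟩ := hind'.infinite_comb_inter_and_sdiff (hinf.mono h𝒜𝒜'.1)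
    (FF_mono_s11 h𝒜𝒜'.1 hh') hX𝒜' hXh'
  exact hfin.elim hinter hdiff

theorem stmt_11 (𝒜 : Set (Set ℕ)) (hinf : 𝒜.Infinite) (hind : IndepFamily 𝒜)
    (hdm : DenselyMaximal 𝒜) :
    ¬ ∃ 𝒜' : Set (Set ℕ), IndepFamily 𝒜' ∧ 𝒜 ⊂ 𝒜' :=
  stmt_11_general 𝒜 hinf hdm
end

section
/- Assume the Continuum Hypothesis, i.e. 2^{ℵ₀} = ℵ₁. Then there exists a selective independent family of subsets of ω. -/
/-!
Under CH, build an increasing `ω₁`-chain of countable independent families. Every sequence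
`Y : ℕ → Set ℕ` is scheduled cofinally often; at its stage we put into the density filter a
pseudo-intersection of the `Y m` (when their finite intersections are positive), then a set meeting
each `Y n` at most once (when the `Y n` are finite, e.g. the cells of a partition), and finally
adjoin sets forcing `Y 0` or its complement below every condition of the current family.

All new sets come from one diagonalization against the countably many boolean combinations of a
countable family. To force `X` below a condition `h` one adjoins a splitting set avoiding
`comb h \ X`; to put a positive set `M` into the density filter one adjoins `ω` splitting subsets
of `M`, so that every condition leaves one of them unassigned. The union of the chain is
independent and selective; it is infinite because the density filter of a finite family is
trivial, hence not a q-set.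
-/

namespace IndependentFamily

open Set Function
open scoped Classical

abbrev Cond := Set ℕ → Option Bool

def condDom (h : Cond) : Set (Set ℕ) := {A | h A ≠ none}

/-- Unlike `FF 𝒜`, `conds 𝒜` admits the empty condition, whose `comb` is `univ`; in particular the
empty family is independent. -/
def conds (𝒜 : Set (Set ℕ)) : Set Cond := {h | (condDom h).Finite ∧ condDom h ⊆ 𝒜}

variable {𝒜 ℬ P : Set (Set ℕ)} {f h h' : Cond} {A M M' Y : Set ℕ} {n : ℕ}

lemma mem_comb_iff : n ∈ comb h ↔ ∀ A b, h A = some b → decide (n ∈ A) = b := by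
  refine ⟨fun hn A b hb => ?_, fun hn A => ⟨fun hA => ?_, fun hA => ?_⟩⟩
  · cases b
    · simpa using (hn A).2 hb
    · simpa using (hn A).1 hb
  · simpa using hn A true hA
  · simpa using hn A false hA

lemma comb_subset_of_extends (he : PFunExtends h h') : comb h' ⊆ comb h := fun _ hn =>
  mem_comb_iff.2 fun A b hb => mem_comb_iff.1 hn A b (he A b hb)

lemma mem_condDom_of_eq_some {b : Bool} (hb : h A = some b) : A ∈ condDom h := by
  simp [condDom, hb]

lemma FF_subset_conds : FF 𝒜 ⊆ conds 𝒜 := fun _ hh => ⟨hh.1, hh.2.2⟩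

lemma mem_FF_of_extends (hh : h ∈ FF 𝒜) (hh' : h' ∈ conds 𝒜) (he : PFunExtends h h') :
    h' ∈ FF 𝒜 := by
  obtain ⟨A, hA⟩ := hh.2.1
  obtain ⟨b, hb⟩ := Option.ne_none_iff_exists'.1 hA
  exact ⟨hh'.1, ⟨A, mem_condDom_of_eq_some (he A b hb)⟩, hh'.2⟩

lemma conds_mono (h𝒜 : 𝒜 ⊆ ℬ) : conds 𝒜 ⊆ conds ℬ := fun _ hh => ⟨hh.1, hh.2.trans h𝒜⟩

lemma none_mem_conds : (fun _ => none : Cond) ∈ conds 𝒜 := by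
  simp [conds, condDom]

@[simp] lemma comb_none : comb (fun _ => none) = univ := by
  ext n; simp [mem_comb_iff]

lemma condDom_update {b : Bool} : condDom (update h A (some b)) = insert A (condDom h) := by
  ext S; by_cases hS : S = A <;> simp [condDom, update, hS]

lemma update_mem_conds {b : Bool} (hh : h ∈ conds 𝒜) (hA : A ∈ 𝒜) :
    update h A (some b) ∈ conds 𝒜 := by
  rw [conds, mem_ofPred_eq, condDom_update]
  exact ⟨hh.1.insert A, insert_subset hA hh.2⟩

lemma extends_update {b : Bool} (hA : h A = none) : PFunExtends h (update h A (some b)) := by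
  intro S c hc
  rcases eq_or_ne S A with rfl | hS
  · simp [hA] at hc
  · rwa [update_of_ne hS]

lemma comb_update_subset {b : Bool} : comb (update h A (some b)) ⊆ {n | decide (n ∈ A) = b} :=
  fun _ hn => mem_comb_iff.1 hn A b (by simp)

noncomputable def restrictCond (h : Cond) (𝒮 : Set (Set ℕ)) : Cond :=
  fun S => if S ∈ 𝒮 then h S else none

lemma comb_eq_inter_restrictCond (𝒮 : Set (Set ℕ)) :
    comb h = comb (restrictCond h 𝒮) ∩ comb (restrictCond h 𝒮ᶜ) := by
  ext n
  simp only [mem_inter_iff, mem_comb_iff, restrictCond, mem_compl_iff]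
  refine ⟨fun hn => ⟨fun A b hb => ?_, fun A b hb => ?_⟩, fun ⟨h₁, h₂⟩ A b hb => ?_⟩
  · split_ifs at hb; exact hn A b hb
  · split_ifs at hb; exact hn A b hb
  · by_cases hA : A ∈ 𝒮
    · exact h₁ A b (by simpa [hA] using hb)
    · exact h₂ A b (by simpa [hA] using hb)

lemma restrictCond_mem_conds (hh : h ∈ conds ℬ) (𝒮 : Set (Set ℕ)) :
    restrictCond h 𝒮 ∈ conds (ℬ ∩ 𝒮) := by
  have hdom : condDom (restrictCond h 𝒮) ⊆ condDom h ∩ 𝒮 := by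
    intro S hS
    by_cases h𝒮 : S ∈ 𝒮 <;> simp_all [condDom, restrictCond]
  exact ⟨hh.1.subset (hdom.trans inter_subset_left), hdom.trans (inter_subset_inter_left _ hh.2)⟩

def merge (f h : Cond) : Cond := fun S => (f S).or (h S)

lemma merge_mem_conds (hf : f ∈ conds 𝒜) (hh : h ∈ conds 𝒜) : merge f h ∈ conds 𝒜 := by
  have hdom : condDom (merge f h) ⊆ condDom f ∪ condDom h := by
    intro S hS
    cases hfS : f S <;> simp_all [condDom, merge]
  exact ⟨(hf.1.union hh.1).subset hdom, hdom.trans (union_subset hf.2 hh.2)⟩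

lemma extends_merge_left : PFunExtends f (merge f h) := by
  intro S b hb; simp [merge, hb]

lemma extends_merge_right (hfh : ∀ S b c, f S = some b → h S = some c → b = c) :
    PFunExtends h (merge f h) := by
  intro S c hc
  cases hfS : f S with
  | none => simp [merge, hfS, hc]
  | some b => simp [merge, hfS, hfh S b c hfS hc]

lemma agree_of_mem_comb (hf : n ∈ comb f) (hh : n ∈ comb h) :
    ∀ S b c, f S = some b → h S = some c → b = c := fun S b c hb hc =>
  (mem_comb_iff.1 hf S b hb).symm.trans (mem_comb_iff.1 hh S c hc)

/-- `CombPositive 𝒜 univ` says that `𝒜` is independent. -/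
def CombPositive (𝒜 : Set (Set ℕ)) (M : Set ℕ) : Prop := ∀ h ∈ conds 𝒜, (comb h ∩ M).Infinite

lemma CombPositive.infinite (hM : CombPositive 𝒜 M) : M.Infinite := by
  simpa using hM _ none_mem_conds

lemma CombPositive.mono (hM : CombPositive 𝒜 M) (hℬ : ℬ ⊆ 𝒜) (hMM' : M ⊆ M') :
    CombPositive ℬ M' := fun h hh =>
  (hM h (conds_mono hℬ hh)).mono (inter_subset_inter_right _ hMM')

lemma CombPositive.notMem (hA : CombPositive 𝒜 (M ∩ A)) : A ∉ 𝒜 := by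
  intro hA𝒜
  obtain ⟨n, hn, _, hnA⟩ := (hA _ (update_mem_conds (b := false) none_mem_conds hA𝒜)).nonempty
  simpa [hnA] using comb_update_subset hn

lemma CombPositive.insert (h₁ : CombPositive 𝒜 (M ∩ A)) (h₂ : CombPositive 𝒜 (M \ A)) :
    CombPositive (insert A 𝒜) M := by
  intro g hg
  have hrest : restrictCond g {A}ᶜ ∈ conds 𝒜 :=
    conds_mono (by rintro S ⟨hS | hS, hSA⟩ <;> simp_all) (restrictCond_mem_conds hg {A}ᶜ)
  have hA : A ⊆ comb (restrictCond g {A}) ∨ Aᶜ ⊆ comb (restrictCond g {A}) := by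
    rcases hgA : g A with _ | _ | _ <;>
      [left; right; left] <;>
      intro n hn <;>
      refine mem_comb_iff.2 fun S b hb => ?_ <;>
      by_cases hS : S = A <;> simp_all [restrictCond]
  rw [comb_eq_inter_restrictCond {A}]
  rcases hA with hA | hA
  · refine (h₁ _ hrest).mono ?_
    rintro n ⟨hn, hnM, hnA⟩
    exact ⟨⟨hA hnA, hn⟩, hnM⟩
  · refine (h₂ _ hrest).mono ?_
    rintro n ⟨hn, hnM, hnA⟩
    exact ⟨⟨hA hnA, hn⟩, hnM⟩

lemma exists_mem_conds_of_directed {ι : Type*} [Nonempty ι] {C : ι → Set (Set ℕ)}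
    (hC : Directed (· ⊆ ·) C) (hh : h ∈ conds (⋃ i, C i)) : ∃ i, h ∈ conds (C i) := by
  obtain ⟨i, hi⟩ := hC.exists_mem_subset_of_finset_subset_biUnion
    (s := hh.1.toFinset) (by simpa using hh.2)
  exact ⟨i, hh.1, by simpa using hi⟩

lemma CombPositive.iUnion {ι : Type*} {C : ι → Set (Set ℕ)} (hC : Directed (· ⊆ ·) C)
    (hM : M.Infinite) (hpos : ∀ i, CombPositive (C i) M) : CombPositive (⋃ i, C i) M := by
  intro h hh
  rcases isEmpty_or_nonempty ι with hι | hι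
  · have : h = fun _ => none := funext fun S => by
      by_contra hS
      simpa using hh.2 hS
    simpa [this] using hM
  · obtain ⟨i, hi⟩ := exists_mem_conds_of_directed hC hh
    exact hpos i h hi

lemma indepFamily_of_combPositive (hind : CombPositive 𝒜 univ) : IndepFamily 𝒜 := by
  refine ⟨fun A hA => ?_, fun B C hB hC _ _ hBC => ?_⟩
  · refine (hind _ (update_mem_conds (b := true) none_mem_conds hA)).mono ?_
    rintro n ⟨hn, -⟩
    simpa using comb_update_subset hn
  · let h : Cond := fun S => if S ∈ B then some true else if S ∈ C then some false else none
    have hdom : condDom h ⊆ ↑B ∪ ↑C := by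
      intro S hS
      by_cases hSB : S ∈ B <;> by_cases hSC : S ∈ C <;> simp_all [h, condDom]
    refine (hind h ⟨(B.finite_toSet.union C.finite_toSet).subset hdom,
      hdom.trans (union_subset hB hC)⟩).mono ?_
    rintro n ⟨hn, -⟩
    refine ⟨?_, ?_⟩
    · exact mem_iInter₂.2 fun S hS => by
        simpa using mem_comb_iff.1 hn S true (by simp [h, Finset.mem_coe.1 hS])
    · simp only [mem_iUnion, not_exists]
      intro S hS hnS
      have hSB : S ∉ B := fun hSB => Finset.disjoint_left.1 hBC hSB hS
      simpa [hnS] using mem_comb_iff.1 hn S false (by simp [h, hSB, Finset.mem_coe.1 hS])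

/-- The density filter with `conds` in place of `FF`; it agrees with `densityFilter` on nonempty
families. -/
def combFilter (𝒜 : Set (Set ℕ)) : Filter ℕ where
  sets := {Y | ∀ h ∈ conds 𝒜, ∃ h' ∈ conds 𝒜, PFunExtends h h' ∧ comb h' ⊆ Y}
  univ_sets h hh := ⟨h, hh, fun _ _ => id, subset_univ _⟩
  sets_of_superset hY hYZ h hh := (hY h hh).imp fun _ ⟨hh', he, hsub⟩ => ⟨hh', he, hsub.trans hYZ⟩
  inter_sets {Y Z} hY hZ h hh := by
    obtain ⟨h₁, hh₁, he₁, hY₁⟩ := hY h hh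
    obtain ⟨h₂, hh₂, he₂, hZ₂⟩ := hZ h₁ hh₁
    exact ⟨h₂, hh₂, fun S b hb => he₂ S b (he₁ S b hb),
      subset_inter ((comb_subset_of_extends he₂).trans hY₁) hZ₂⟩

lemma mem_densityFilter_of_mem_combFilter (hY : Y ∈ combFilter 𝒜) : Y ∈ densityFilter 𝒜 :=
  fun h hh => (hY h (FF_subset_conds hh)).imp fun _ ⟨hh', he, hsub⟩ =>
    ⟨mem_FF_of_extends hh hh' he, he, hsub⟩

lemma mem_combFilter_of_mem_densityFilter (h𝒜 : 𝒜.Nonempty) (hY : Y ∈ densityFilter 𝒜) :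
    Y ∈ combFilter 𝒜 := by
  intro h hh
  obtain ⟨A, hA⟩ := h𝒜
  have hFF : merge h (update (fun _ => none) A (some true)) ∈ FF 𝒜 := by
    refine ⟨(merge_mem_conds hh (update_mem_conds none_mem_conds hA)).1, ⟨A, ?_⟩,
      (merge_mem_conds hh (update_mem_conds none_mem_conds hA)).2⟩
    cases hhA : h A <;> simp [merge, hhA]
  obtain ⟨h', hh', he, hsub⟩ := hY _ hFF
  exact ⟨h', FF_subset_conds hh', fun S b hb => he S b (extends_merge_left S b hb), hsub⟩

lemma combFilter_antitone (h𝒜ℬ : 𝒜 ⊆ ℬ) : combFilter ℬ ≤ combFilter 𝒜 := by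
  intro Y hY h hh
  obtain ⟨h₁, hh₁, he₁, hY₁⟩ := hY (restrictCond h 𝒜) (conds_mono inter_subset_right
    (restrictCond_mem_conds hh 𝒜))
  have hagree : ∀ S b c, h₁ S = some b → h S = some c → b = c := fun S b c hb hc => by
    have hS : S ∈ 𝒜 := hh₁.2 (mem_condDom_of_eq_some hb)
    simpa [hb] using he₁ S c (by simp [restrictCond, hS, hc])
  exact ⟨merge h₁ h, merge_mem_conds (conds_mono h𝒜ℬ hh₁) hh, extends_merge_right hagree,
    (comb_subset_of_extends extends_merge_left).trans hY₁⟩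

lemma CombPositive.of_mem_combFilter (hind : CombPositive 𝒜 univ) (hY : Y ∈ combFilter 𝒜) :
    CombPositive 𝒜 Y := by
  intro h hh
  obtain ⟨h', hh', he, hsub⟩ := hY h hh
  refine (hind h' hh').mono ?_
  rintro n ⟨hn, -⟩
  exact ⟨comb_subset_of_extends he hn, hsub hn⟩

lemma eq_univ_of_mem_combFilter (h𝒜 : 𝒜.Finite) (hY : Y ∈ combFilter 𝒜) : Y = univ := by
  refine eq_univ_of_forall fun n => ?_
  -- on a finite family, the condition recording the position of `n` has no proper extension
  let hn : Cond := fun S => if S ∈ 𝒜 then some (decide (n ∈ S)) else none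
  have hdom : condDom hn ⊆ 𝒜 := fun S hS => by by_contra h; simp [hn, condDom, h] at hS
  obtain ⟨h', hh', he, hsub⟩ := hY hn ⟨h𝒜.subset hdom, hdom⟩
  refine hsub (mem_comb_iff.2 fun S b hb => ?_)
  have hS : S ∈ 𝒜 := hh'.2 (mem_condDom_of_eq_some hb)
  simpa [hb] using (he S (decide (n ∈ S)) (by simp [hn, hS])).symm

lemma infinite_of_isQSet (hq : IsQSet (combFilter 𝒜).sets) : 𝒜.Infinite := by
  intro h𝒜
  let E : Set (Set ℕ) := range fun k => {n | n / 2 = k}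
  have hE : IsFinPartition E := by
    refine ⟨?_, ?_, ?_⟩
    · rintro _ ⟨k, rfl⟩
      exact (finite_Iic (2 * k + 1)).subset fun n hn => by simp at hn ⊢; omega
    · exact eq_univ_of_forall fun n => ⟨_, ⟨n / 2, rfl⟩, rfl⟩
    · rintro _ ⟨k, rfl⟩ _ ⟨l, rfl⟩ hkl
      refine disjoint_left.2 fun n hk hl => hkl ?_
      rw [← show n / 2 = k from hk, ← show n / 2 = l from hl]
  obtain ⟨C, hC, hsel⟩ := hq E hE
  rw [eq_univ_of_mem_combFilter h𝒜 hC] at hsel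
  simpa using hsel _ ⟨0, rfl⟩ (x := 0) (by simp) (y := 1) (by simp)

def Decides (X : Set ℕ) (h : Cond) : Prop := (comb h ∩ X).Finite ∨ (comb h \ X).Finite

lemma denselyMaximal_of_forall_decides
    (hdec : ∀ X, ∀ h ∈ conds 𝒜, ∃ h' ∈ conds 𝒜, PFunExtends h h' ∧ Decides X h') :
    DenselyMaximal 𝒜 := fun X _ h hh =>
  (hdec X h (FF_subset_conds hh)).imp fun _ ⟨hh', he, hX⟩ =>
    ⟨mem_FF_of_extends hh hh' he, he, hX⟩

lemma exists_strictMono_mem (W : ℕ → Set ℕ) (hW : ∀ t, (W t).Infinite) (g : ℕ → ℕ) :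
    ∃ x : ℕ → ℕ, StrictMono x ∧ (∀ t, g (x t) < x (t + 1)) ∧ ∀ t, x t ∈ W t := by
  choose next hnext hlt using fun t a => (hW t).exists_gt a
  let x : ℕ → ℕ := fun t => Nat.rec (next 0 0) (fun t xt => next (t + 1) (xt + g xt)) t
  refine ⟨x, strictMono_nat_of_lt_succ fun t => ?_, fun t => ?_, fun t => ?_⟩
  · exact (Nat.le_add_right _ _).trans_lt (hlt (t + 1) _)
  · exact (Nat.le_add_left _ _).trans_lt (hlt (t + 1) _)
  · cases t <;> exact hnext _ _

lemma countable_conds (h𝒜 : 𝒜.Countable) : (conds 𝒜).Countable := by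
  let graph : Cond → Set (Set ℕ × Bool) := fun h => {p | h p.1 = some p.2}
  have hinj : Injective graph := fun h h' hgr => funext fun S => Option.ext fun b => by
    simpa [graph] using Set.ext_iff.1 hgr (S, b)
  refine ((countable_ofPred_finite_subset (h𝒜.prod countable_univ)).preimage hinj).mono ?_
  intro h hh
  have hgraph : graph h ⊆ condDom h ×ˢ univ := fun p hp =>
    ⟨mem_condDom_of_eq_some (show h p.1 = some p.2 from hp), mem_univ _⟩
  exact ⟨(hh.1.prod finite_univ).subset hgraph, hgraph.trans (prod_mono hh.2 subset_rfl)⟩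

lemma exists_diagonal (h𝒜 : 𝒜.Countable) (V : ℕ → Set ℕ) (hV : ∀ t, CombPositive 𝒜 (V t))
    (g : ℕ → ℕ) :
    ∃ x : ℕ → ℕ, StrictMono x ∧ (∀ t, g (x t) < x (t + 1)) ∧ (∀ t, x t ∈ V t) ∧
      ∀ h ∈ conds 𝒜, ∃ k, ∀ j, x (Nat.pair k j) ∈ comb h := by
  obtain ⟨e, he⟩ := (countable_conds h𝒜).exists_eq_range ⟨_, none_mem_conds⟩
  obtain ⟨x, hmono, hg, hx⟩ := exists_strictMono_mem (fun t => comb (e (Nat.unpair t).1) ∩ V t)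
    (fun t => hV t _ (he ▸ mem_range_self _)) g
  refine ⟨x, hmono, hg, fun t => (hx t).2, fun h hh => ?_⟩
  obtain ⟨k, rfl⟩ : h ∈ range e := he ▸ hh
  exact ⟨k, fun j => by simpa using (hx (Nat.pair k j)).1⟩

lemma infinite_of_forall_pair_mem {x : ℕ → ℕ} (hx : Injective x) {k : ℕ} {p : ℕ → ℕ}
    (hp : Injective p) {S : Set ℕ} (hS : ∀ j, x (Nat.pair k (p j)) ∈ S) : S.Infinite :=
  infinite_of_injective_forall_mem (fun _ _ hj => hp (Nat.pair_eq_pair.1 (hx hj)).2) hS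

lemma exists_split (h𝒜 : 𝒜.Countable) (hM : CombPositive 𝒜 M) :
    ∃ A ⊆ M, CombPositive 𝒜 (M ∩ A) ∧ CombPositive 𝒜 (M \ A) := by
  obtain ⟨x, hmono, -, hxM, hx⟩ := exists_diagonal h𝒜 (fun _ => M) (fun _ => hM) id
  let A := x '' {t | Even (Nat.unpair t).2}
  have hA : ∀ t, x t ∈ A ↔ Even (Nat.unpair t).2 := fun t => hmono.injective.mem_set_image
  refine ⟨A, image_subset_iff.2 fun t _ => hxM t, fun h hh => ?_, fun h hh => ?_⟩
  · obtain ⟨k, hk⟩ := hx h hh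
    exact infinite_of_forall_pair_mem hmono.injective (mul_right_injective₀ two_ne_zero)
      fun j => ⟨hk _, hxM _, (hA _).2 (by simp)⟩
  · obtain ⟨k, hk⟩ := hx h hh
    exact infinite_of_forall_pair_mem hmono.injective (p := (2 * · + 1))
      (fun _ _ hj => by simpa using hj) fun j => ⟨hk _, hxM _, fun hj => by simpa using (hA _).1 hj⟩

/-- When `Y n` is the cell of `n` in a partition, a sparse set meets every cell at most once. -/
def Sparse (Y : ℕ → Set ℕ) (M : Set ℕ) : Prop := ∀ a ∈ M, ∀ b ∈ M, a < b → b ∉ Y a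

lemma exists_sparse (h𝒜 : 𝒜.Countable) (hind : CombPositive 𝒜 univ) {Y : ℕ → Set ℕ}
    (hY : ∀ n, (Y n).Finite) : ∃ M, CombPositive 𝒜 M ∧ Sparse Y M := by
  -- `g` is monotone and bounds `Y i` for `i ≤ n`, so a point above `g (x t)` avoids the sets
  -- `Y (x s)` for all `s ≤ t`
  let g : ℕ → ℕ := fun n => ∑ i ∈ Finset.range (n + 1), sSup (Y i)
  have hg : ∀ {i n}, i ≤ n → ∀ b ∈ Y i, b ≤ g n := fun {i _} hin _ hb =>
    (le_csSup (hY i).bddAbove hb).trans (Finset.single_le_sum (f := fun i => sSup (Y i))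
      (fun _ _ => Nat.zero_le _) (Finset.mem_range.2 (Nat.lt_succ_of_le hin)))
  obtain ⟨x, hmono, hxg, -, hx⟩ := exists_diagonal h𝒜 (fun _ => univ) (fun _ => hind) g
  refine ⟨range x, fun h hh => ?_, ?_⟩
  · obtain ⟨k, hk⟩ := hx h hh
    exact infinite_of_forall_pair_mem hmono.injective injective_id
      fun j => ⟨hk j, mem_range_self _⟩
  · rintro _ ⟨s, rfl⟩ _ ⟨t, rfl⟩ hst hmem
    obtain ⟨t, rfl⟩ : ∃ t', t = t' + 1 := ⟨t - 1, by have := hmono.lt_iff_lt.1 hst; omega⟩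
    have hs : x s ≤ x t := hmono.monotone (Nat.le_of_lt_succ (hmono.lt_iff_lt.1 hst))
    exact (hxg t).not_ge (hg hs _ hmem)

lemma exists_pseudoIntersection (h𝒜 : 𝒜.Countable) {Y : ℕ → Set ℕ}
    (hY : ∀ k, CombPositive 𝒜 (⋂ m ≤ k, Y m)) :
    ∃ M, CombPositive 𝒜 M ∧ ∀ m, (M \ Y m).Finite := by
  obtain ⟨x, hmono, -, hxY, hx⟩ := exists_diagonal h𝒜 _ hY id
  refine ⟨range x, fun h hh => ?_, fun m => ((finite_Iio m).image x).subset ?_⟩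
  · obtain ⟨k, hk⟩ := hx h hh
    exact infinite_of_forall_pair_mem hmono.injective injective_id
      fun j => ⟨hk j, mem_range_self _⟩
  · rintro _ ⟨⟨t, rfl⟩, hnot⟩
    exact ⟨t, show t < m from not_le.1 fun hle => hnot (mem_iInter₂.1 (hxY t) m hle), rfl⟩

lemma exists_chain (r : ℕ → Set (Set ℕ) → Set (Set ℕ) → Prop)
    (step : ∀ n P, 𝒜 ⊆ P → P.Countable → CombPositive P M →
      ∃ Q, P ⊆ Q ∧ Q.Countable ∧ CombPositive Q M ∧ r n P Q)
    (h𝒜 : 𝒜.Countable) (hM : CombPositive 𝒜 M) :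
    ∃ c : ℕ → Set (Set ℕ), Monotone c ∧ 𝒜 ⊆ ⋃ n, c n ∧ (⋃ n, c n).Countable ∧
      CombPositive (⋃ n, c n) M ∧ ∀ n, r n (c n) (c (n + 1)) := by
  let Good := {P : Set (Set ℕ) // 𝒜 ⊆ P ∧ P.Countable ∧ CombPositive P M}
  choose next hsub hcount hpos hr using fun n (P : Good) => step n P.1 P.2.1 P.2.2.1 P.2.2.2
  let c : ℕ → Good := fun n =>
    Nat.rec ⟨𝒜, subset_rfl, h𝒜, hM⟩ (fun n P => ⟨next n P, P.2.1.trans (hsub n P),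
      hcount n P, hpos n P⟩) n
  have hmono : Monotone fun n => (c n).1 := monotone_nat_of_le_succ fun n => hsub n (c n)
  exact ⟨fun n => (c n).1, hmono, subset_iUnion_of_subset 0 subset_rfl,
    countable_iUnion fun n => (c n).2.2.1,
    CombPositive.iUnion hmono.directed_le hM.infinite fun n => (c n).2.2.2, fun n => hr n (c n)⟩

lemma exists_extension_decides (h𝒜 : 𝒜.Countable) (hind : CombPositive 𝒜 univ) (X : Set ℕ)
    (hh : h ∈ conds 𝒜) :
    ∃ ℬ, 𝒜 ⊆ ℬ ∧ ℬ.Countable ∧ CombPositive ℬ univ ∧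
      ∃ h' ∈ conds ℬ, PFunExtends h h' ∧ Decides X h' := by
  by_cases hdec : ∃ h' ∈ conds 𝒜, PFunExtends h h' ∧ Decides X h'
  · exact ⟨𝒜, subset_rfl, h𝒜, hind, hdec⟩
  push Not at hdec
  -- Every condition meets `(comb h \ X)ᶜ` infinitely, so a new set `A` inside it can be adjoined,
  -- and then `h ∪ {A ↦ 1}` forces `X`.
  have hM : CombPositive 𝒜 (comb h \ X)ᶜ := by
    intro f hf
    by_cases hfh : (comb f ∩ comb h).Nonempty
    · obtain ⟨n, hnf, hnh⟩ := hfh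
      have hX : (comb (merge f h) ∩ X).Infinite := fun hfin =>
        hdec _ (merge_mem_conds hf hh) (extends_merge_right (agree_of_mem_comb hnf hnh))
          (Or.inl hfin)
      refine hX.mono ?_
      rintro m ⟨hm, hmX⟩
      exact ⟨comb_subset_of_extends extends_merge_left hm, fun hm' => hm'.2 hmX⟩
    · refine (hind f hf).mono ?_
      rintro m ⟨hm, -⟩
      exact ⟨hm, fun hm' => hfh ⟨m, hm, hm'.1⟩⟩
  obtain ⟨A, hAM, hA₁, hA₂⟩ := exists_split h𝒜 hM
  have hhA : h A = none := by
    by_contra hne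
    exact hA₁.notMem (hh.2 hne)
  refine ⟨insert A 𝒜, subset_insert _ _, h𝒜.insert A,
    (hA₁.mono subset_rfl (inter_subset_inter_left _ (subset_univ _))).insert
      (hA₂.mono subset_rfl (sdiff_subset_sdiff_left (subset_univ _))),
    update h A (some true), update_mem_conds (conds_mono (subset_insert _ _) hh) (mem_insert _ _),
    extends_update hhA, Or.inr (finite_empty.subset ?_)⟩
  rintro n ⟨hn, hnX⟩
  have hnA : n ∈ A := by simpa using comb_update_subset hn
  exact hAM hnA ⟨comb_subset_of_extends (extends_update hhA) hn, hnX⟩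

lemma exists_extension_decides_all (h𝒜 : 𝒜.Countable) (hind : CombPositive 𝒜 univ)
    (X : Set ℕ) :
    ∃ ℬ, 𝒜 ⊆ ℬ ∧ ℬ.Countable ∧ CombPositive ℬ univ ∧
      ∀ h ∈ conds 𝒜, ∃ h' ∈ conds ℬ, PFunExtends h h' ∧ Decides X h' := by
  obtain ⟨e, he⟩ := (countable_conds h𝒜).exists_eq_range ⟨_, none_mem_conds⟩
  have he𝒜 : ∀ n, e n ∈ conds 𝒜 := fun n => he ▸ mem_range_self n
  obtain ⟨c, -, h𝒜c, hcount, hpos, hr⟩ :=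
    exists_chain (fun n _ Q => ∃ h' ∈ conds Q, PFunExtends (e n) h' ∧ Decides X h')
      (fun n _ h𝒜P hP hindP => exists_extension_decides hP hindP X (conds_mono h𝒜P (he𝒜 n)))
      h𝒜 hind
  refine ⟨⋃ n, c n, h𝒜c, hcount, hpos, fun h hh => ?_⟩
  obtain ⟨n, rfl⟩ : h ∈ range e := he ▸ hh
  obtain ⟨h', hh', hext, hdec⟩ := hr n
  exact ⟨h', conds_mono (subset_iUnion c (n + 1)) hh', hext, hdec⟩

lemma exists_extension_mem_combFilter (h𝒜 : 𝒜.Countable) (hM : CombPositive 𝒜 M) :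
    ∃ ℬ, 𝒜 ⊆ ℬ ∧ ℬ.Countable ∧ CombPositive ℬ univ ∧ M ∈ combFilter ℬ := by
  obtain ⟨c, hmono, h𝒜c, hcount, hpos, hr⟩ :=
    exists_chain (M := M) (fun _ P Q => ∃ A ∈ Q, A ∉ P ∧ A ⊆ M)
      (fun _ P _ hP hMP => by
        obtain ⟨A, hAM, hA₁, hA₂⟩ := exists_split hP hMP
        exact ⟨insert A P, subset_insert _ _, hP.insert A, hA₁.insert hA₂, A, mem_insert _ _,
          hA₁.notMem, hAM⟩)
      h𝒜 hM
  refine ⟨⋃ n, c n, h𝒜c, hcount, hpos.mono subset_rfl (subset_univ _), fun h hh => ?_⟩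
  obtain ⟨N, hN⟩ := exists_mem_conds_of_directed hmono.directed_le hh
  obtain ⟨A, hA, hAN, hAM⟩ := hr N
  have hhA : h A = none := by
    by_contra hne
    exact hAN (hN.2 hne)
  exact ⟨update h A (some true), update_mem_conds hh (mem_iUnion.2 ⟨N + 1, hA⟩),
    extends_update hhA, fun n hn => hAM (by simpa using comb_update_subset hn)⟩

lemma exists_extension_sparse (h𝒜 : 𝒜.Countable) (hind : CombPositive 𝒜 univ)
    (Y : ℕ → Set ℕ) :
    ∃ ℬ, 𝒜 ⊆ ℬ ∧ ℬ.Countable ∧ CombPositive ℬ univ ∧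
      ((∀ n, (Y n).Finite) → ∃ M ∈ combFilter ℬ, Sparse Y M) := by
  by_cases hY : ∀ n, (Y n).Finite
  · obtain ⟨M, hM, hsparse⟩ := exists_sparse h𝒜 hind hY
    obtain ⟨ℬ, h𝒜ℬ, hℬ, hindℬ, hMℬ⟩ := exists_extension_mem_combFilter h𝒜 hM
    exact ⟨ℬ, h𝒜ℬ, hℬ, hindℬ, fun _ => ⟨M, hMℬ, hsparse⟩⟩
  · exact ⟨𝒜, subset_rfl, h𝒜, hind, fun h => absurd h hY⟩

lemma exists_extension_pseudoIntersection (h𝒜 : 𝒜.Countable) (hind : CombPositive 𝒜 univ)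
    (Y : ℕ → Set ℕ) :
    ∃ ℬ, 𝒜 ⊆ ℬ ∧ ℬ.Countable ∧ CombPositive ℬ univ ∧
      ((∀ k, CombPositive 𝒜 (⋂ m ≤ k, Y m)) → ∃ M ∈ combFilter ℬ, ∀ m, (M \ Y m).Finite) := by
  by_cases hY : ∀ k, CombPositive 𝒜 (⋂ m ≤ k, Y m)
  · obtain ⟨M, hM, hMY⟩ := exists_pseudoIntersection h𝒜 hY
    obtain ⟨ℬ, h𝒜ℬ, hℬ, hindℬ, hMℬ⟩ := exists_extension_mem_combFilter h𝒜 hM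
    exact ⟨ℬ, h𝒜ℬ, hℬ, hindℬ, fun _ => ⟨M, hMℬ, hMY⟩⟩
  · exact ⟨𝒜, subset_rfl, h𝒜, hind, fun h => absurd h hY⟩

/-- One step of the construction: the sequence `Y` is read at once as the set `Y 0` to be
decided, as the cells of a partition, and as a family needing a pseudo-intersection. -/
structure IsStage (P Q : Set (Set ℕ)) (Y : ℕ → Set ℕ) : Prop where
  subset : P ⊆ Q
  countable : Q.Countable
  combPositive : CombPositive Q univ
  decides : ∀ h ∈ conds P, ∃ h' ∈ conds Q, PFunExtends h h' ∧ Decides (Y 0) h'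
  sparse : (∀ n, (Y n).Finite) → ∃ M ∈ combFilter Q, Sparse Y M
  pseudoIntersection :
    (∀ k, CombPositive P (⋂ m ≤ k, Y m)) → ∃ M ∈ combFilter Q, ∀ m, (M \ Y m).Finite

lemma exists_isStage (hP : P.Countable) (hind : CombPositive P univ) (Y : ℕ → Set ℕ) :
    ∃ Q, IsStage P Q Y := by
  obtain ⟨P₁, hPP₁, hP₁, hind₁, hpseudo⟩ := exists_extension_pseudoIntersection hP hind Y
  obtain ⟨P₂, hP₁P₂, hP₂, hind₂, hsparse⟩ := exists_extension_sparse hP₁ hind₁ Y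
  obtain ⟨P₃, hP₂P₃, hP₃, hind₃, hdec⟩ := exists_extension_decides_all hP₂ hind₂ (Y 0)
  refine ⟨P₃, hPP₁.trans (hP₁P₂.trans hP₂P₃), hP₃, hind₃,
    fun h hh => hdec h (conds_mono (hPP₁.trans hP₁P₂) hh), fun hY => ?_, fun hY => ?_⟩
  · obtain ⟨M, hM, hs⟩ := hsparse hY
    exact ⟨M, combFilter_antitone hP₂P₃ hM, hs⟩
  · obtain ⟨M, hM, hs⟩ := hpseudo hY
    exact ⟨M, combFilter_antitone (hP₁P₂.trans hP₂P₃) hM, hs⟩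

section OmegaOne

open Cardinal

universe u

lemma two_power_aleph0_eq_aleph_one (hCH : (2 : Cardinal.{u}) ^ ℵ₀ = ℵ₁) :
    (2 : Cardinal.{0}) ^ ℵ₀ = ℵ₁ :=
  lift_injective.{u, 0} (by simpa using hCH)

lemma mk_nat_arrow_set : #(ℕ → Set ℕ) = 2 ^ ℵ₀ := by
  rw [mk_arrow, mk_set, mk_nat, lift_id, lift_aleph0, ← power_mul, aleph0_mul_aleph0]

abbrev OmegaOne : Type := (ℵ₁ : Cardinal.{0}).ord.ToType

lemma mk_omegaOne : #OmegaOne = ℵ₁ := by simp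

lemma countable_Iio_omegaOne (x : OmegaOne) : (Iio x).Countable := by
  rw [← le_aleph0_iff_set_countable, ← Order.lt_succ_iff, succ_aleph0]
  simpa using mk_Iio_lt x

lemma exists_cofinal_schedule (hCH : (2 : Cardinal.{0}) ^ ℵ₀ = ℵ₁) :
    ∃ task : OmegaOne → ℕ → Set ℕ, ∀ Y x, ∃ β, x < β ∧ task β = Y := by
  obtain ⟨b⟩ : Nonempty (OmegaOne ≃ (ℕ → Set ℕ) × OmegaOne) := by
    rw [← Cardinal.eq, mk_prod, lift_id, lift_id, mk_nat_arrow_set, hCH, mk_omegaOne,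
      mul_eq_self aleph0_lt_aleph_one.le]
  refine ⟨fun β => (b β).1, fun Y x => ?_⟩
  by_contra! hbound
  have hinj : Injective fun y => b.symm (Y, y) := fun y z hyz => by simpa using hyz
  have hsub : range (fun y => b.symm (Y, y)) ⊆ Iic x := by
    rintro _ ⟨y, rfl⟩
    exact not_lt.1 fun hxy => hbound _ hxy (by simp)
  have hcount := le_aleph0_iff_set_countable.2
    ((Iio_insert (a := x) ▸ (countable_Iio_omegaOne x).insert x).mono hsub)
  rw [mk_range_eq _ hinj, mk_omegaOne] at hcount
  exact hcount.not_gt aleph0_lt_aleph_one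

instance : Nonempty OmegaOne := by
  rw [← mk_ne_zero_iff, mk_omegaOne]
  exact aleph0_lt_aleph_one.ne_bot

end OmegaOne

noncomputable def nextStage (P : Set (Set ℕ)) (Y : ℕ → Set ℕ) : Set (Set ℕ) :=
  if hP : P.Countable ∧ CombPositive P univ then (exists_isStage hP.1 hP.2 Y).choose else P

lemma isStage_nextStage (hP : P.Countable) (hind : CombPositive P univ) (Y : ℕ → Set ℕ) :
    IsStage P (nextStage P Y) Y := by
  rw [nextStage, dif_pos ⟨hP, hind⟩]
  exact (exists_isStage hP hind Y).choose_spec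

variable (task : OmegaOne → ℕ → Set ℕ)

noncomputable def stage : OmegaOne → Set (Set ℕ) :=
  wellFounded_lt.fix fun x IH => nextStage (⋃ y, ⋃ hy : y < x, IH y hy) (task x)

lemma isStage_stage (x : OmegaOne) : IsStage (⋃ y < x, stage task y) (stage task x) (task x) := by
  induction x using WellFoundedLT.induction with
  | _ x IH =>
    have hmono : ∀ y z, y ≤ z → z < x → stage task y ⊆ stage task z := fun y z hyz hz =>
      hyz.eq_or_lt.elim (fun h => h ▸ subset_rfl) fun h =>
        (subset_iUnion₂_of_subset y h subset_rfl).trans (IH z hz).subset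
    have hdir : Directed (· ⊆ ·) fun y : Iio x => stage task y := fun y z =>
      (le_total y z).elim (fun h => ⟨z, hmono _ _ h z.2, subset_rfl⟩)
        fun h => ⟨y, subset_rfl, hmono _ _ h y.2⟩
    have hcount : (⋃ y < x, stage task y).Countable :=
      (countable_Iio_omegaOne x).biUnion fun y hy => (IH y hy).countable
    have hpos : CombPositive (⋃ y < x, stage task y) univ := by
      simpa only [iUnion_subtype, mem_Iio] using
        CombPositive.iUnion hdir infinite_univ fun y => (IH y y.2).combPositive
    rw [stage, wellFounded_lt.fix_eq]
    exact isStage_nextStage hcount hpos _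

lemma stage_mono : Monotone (stage task) := fun y z hyz =>
  hyz.eq_or_lt.elim (fun h => h ▸ subset_rfl) fun h =>
    (subset_iUnion₂_of_subset y h subset_rfl).trans (isStage_stage task z).subset

def limit : Set (Set ℕ) := ⋃ x, stage task x

lemma combPositive_limit : CombPositive (limit task) univ :=
  CombPositive.iUnion (stage_mono task).directed_le infinite_univ
    fun x => (isStage_stage task x).combPositive

lemma combFilter_stage_le (x : OmegaOne) : combFilter (limit task) ≤ combFilter (stage task x) :=
  combFilter_antitone (subset_iUnion _ x)

variable {task}

lemma limit_decides (htask : ∀ Y x, ∃ β, x < β ∧ task β = Y) (X : Set ℕ) :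
    ∀ h ∈ conds (limit task), ∃ h' ∈ conds (limit task), PFunExtends h h' ∧ Decides X h' := by
  intro h hh
  obtain ⟨x, hx⟩ := exists_mem_conds_of_directed (stage_mono task).directed_le hh
  obtain ⟨β, hxβ, hβ⟩ := htask (fun _ => X) x
  obtain ⟨h', hh', hext, hdec⟩ :=
    (isStage_stage task β).decides h (conds_mono (subset_iUnion₂_of_subset x hxβ subset_rfl) hx)
  rw [hβ] at hdec
  exact ⟨h', conds_mono (subset_iUnion _ β) hh', hext, hdec⟩

lemma isQSet_limit (htask : ∀ Y x, ∃ β, x < β ∧ task β = Y) :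
    IsQSet (combFilter (limit task)).sets := by
  intro E hE
  choose cell hcellE hmem using fun n => mem_sUnion.1 (hE.2.1 ▸ mem_univ n)
  obtain ⟨β, -, hβ⟩ := htask cell (Classical.arbitrary _)
  obtain ⟨M, hM, hsparse⟩ := (isStage_stage task β).sparse (hβ ▸ fun n => hE.1 _ (hcellE n))
  refine ⟨M, combFilter_stage_le task β hM, fun e he a ha b hb => ?_⟩
  have hcell : ∀ {c}, c ∈ e → cell c = e := fun hc => hE.2.2.elim_set (hcellE _) he _ (hmem _) hc
  rcases lt_trichotomy a b with hab | rfl | hab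
  · exact absurd (hcell ha.1 ▸ hb.1) (hβ ▸ hsparse a ha.2 b hb.2 hab)
  · rfl
  · exact absurd (hcell hb.1 ▸ ha.1) (hβ ▸ hsparse b hb.2 a ha.2 hab)

/-- Independence of the limit makes the finite intersections of a sequence from its density filter
positive at every stage, so the stage scheduled for the sequence adds a pseudo-intersection. -/
lemma isPSet_limit (htask : ∀ Y x, ∃ β, x < β ∧ task β = Y) (hne : (limit task).Nonempty) :
    IsPSet (densityFilter (limit task)) := by
  intro F₀ hF₀ hcount
  obtain ⟨Y, hY⟩ := (hcount.insert univ).exists_eq_range (insert_nonempty _ _)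
  have hYfil : ∀ m, Y m ∈ combFilter (limit task) := fun m => by
    rcases (hY ▸ mem_range_self m : Y m ∈ insert univ F₀) with h | h
    · exact h ▸ Filter.univ_mem
    · exact mem_combFilter_of_mem_densityFilter hne (hF₀ h)
  obtain ⟨β, -, hβ⟩ := htask Y (Classical.arbitrary _)
  have hpos : ∀ k, CombPositive (⋃ y < β, stage task y) (⋂ m ≤ k, task β m) := fun k =>
    ((combPositive_limit task).of_mem_combFilter
      ((Filter.biInter_mem (finite_Iic k)).2 fun m _ => hβ ▸ hYfil m)).mono
      (iUnion₂_subset fun y _ => subset_iUnion _ y) subset_rfl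
  obtain ⟨M, hM, hMY⟩ := (isStage_stage task β).pseudoIntersection hpos
  refine ⟨M, mem_densityFilter_of_mem_combFilter (combFilter_stage_le task β hM), fun X hX => ?_⟩
  obtain ⟨m, rfl⟩ : X ∈ range Y := hY ▸ mem_insert_of_mem _ hX
  exact hβ ▸ hMY m

end IndependentFamily

theorem stmt_12 (hCH : (2 : Cardinal) ^ Cardinal.aleph0 = Cardinal.aleph 1) :
    ∃ 𝒜 : Set (Set ℕ), 𝒜.Infinite ∧ Selective 𝒜 := by
  obtain ⟨task, htask⟩ := IndependentFamily.exists_cofinal_schedule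
    (IndependentFamily.two_power_aleph0_eq_aleph_one hCH)
  have hq := IndependentFamily.isQSet_limit htask
  have hinf := IndependentFamily.infinite_of_isQSet hq
  refine ⟨IndependentFamily.limit task, hinf,
    IndependentFamily.indepFamily_of_combPositive (IndependentFamily.combPositive_limit task),
    IndependentFamily.denselyMaximal_of_forall_decides (IndependentFamily.limit_decides htask),
    IndependentFamily.isPSet_limit htask hinf.nonempty, fun E hE => ?_⟩
  obtain ⟨C, hC, hsel⟩ := hq E hE
  exact ⟨C, IndependentFamily.mem_densityFilter_of_mem_combFilter hC, hsel⟩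
end

section
/- Let 𝓕 be a proper filter on ω containing all cofinite subsets of ω which is both a p-set and a q-set, and let ⟨Z_l : l ∈ ω⟩ be a sequence of elements of 𝓕. Then there exists D ∈ 𝓕 such that, if ⟨e_j : j ∈ ω⟩ is the increasing enumeration of D, then e_j ∈ Z_j for every j ∈ ω. -/
/-! Take a pseudo-intersection `C ∈ 𝓕` of the `Z l` (p-set), and cut `ω` into intervals
`[n k, n (k + 1))` growing so fast that every element of `C` beyond `n (k + 1)` lies in
`Z 0 ∩ ⋯ ∩ Z (n k)`. A semi-selector `S ∈ 𝓕` of this partition (q-set) makes the `j`-th element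
of `D = C ∩ S ∩ [n 1, ∞)` lie at or beyond `n (j + 1)`, hence in `Z j`. -/

open Set

theorem isFinPartition_range_Ico {n : ℕ → ℕ} (hn : StrictMono n) (h0 : n 0 = 0) :
    IsFinPartition (range fun k => Ico (n k) (n (k + 1))) := by
  refine ⟨?_, ?_, hn.monotone.pairwise_disjoint_on_Ico_succ.range_pairwise⟩
  · rintro _ ⟨k, rfl⟩
    exact finite_Ico _ _
  · rw [sUnion_range]
    simpa [h0] using iUnion_Ico_map_succ_eq_Ici (fun k => hn.monotone (Nat.zero_le k))
      hn.not_bddAbove_range_of_wellFoundedLT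

theorem infinite_of_mem {F : Set (Set ℕ)} (hcap : ∀ X ∈ F, ∀ Y ∈ F, X ∩ Y ∈ F)
    (hproper : (∅ : Set ℕ) ∉ F) (hcofin : ∀ X : Set ℕ, Xᶜ.Finite → X ∈ F)
    {X : Set ℕ} (hX : X ∈ F) : X.Infinite := fun hfin =>
  hproper (by simpa using hcap X hX Xᶜ (hcofin Xᶜ (by simpa using hfin)))

theorem exists_forall_mem_of_finite_diff {C : Set ℕ} {Z : ℕ → Set ℕ}
    (hC : ∀ l, (C \ Z l).Finite) (l : ℕ) :
    ∃ N, ∀ m ∈ C, N ≤ m → ∀ i ≤ l, m ∈ Z i := by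
  obtain ⟨N, hN⟩ := ((finite_Iic l).biUnion fun i _ => hC i).bddAbove
  refine ⟨N + 1, fun m hm hNm i hi => by_contra fun hmZ => ?_⟩
  have : m ≤ N := hN (mem_biUnion (mem_Iic.2 hi) ⟨hm, hmZ⟩)
  omega

theorem exists_strictMono_forall_le_succ (b : ℕ → ℕ) :
    ∃ n : ℕ → ℕ, StrictMono n ∧ n 0 = 0 ∧ ∀ k, b (n k) ≤ n (k + 1) := by
  let n : ℕ → ℕ := fun k => Nat.rec 0 (fun _ nk => max (nk + 1) (b nk)) k
  exact ⟨n, strictMono_nat_of_lt_succ fun k => by simp [n], rfl, fun k => by simp [n]⟩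

theorem le_nth_of_subsingleton_inter_Ico {n : ℕ → ℕ} {D : Set ℕ} (hD : D.Infinite)
    (hsel : ∀ k, (Ico (n k) (n (k + 1)) ∩ D).Subsingleton) (h0 : ∀ m ∈ D, n 0 ≤ m) (j : ℕ) :
    n j ≤ Nat.nth (· ∈ D) j := by
  have hmem := Nat.nth_mem_of_infinite (p := (· ∈ D)) hD
  induction j with
  | zero => exact h0 _ (hmem 0)
  | succ j ih =>
    have hlt := Nat.nth_strictMono (p := (· ∈ D)) hD (Nat.lt_add_one j)
    by_contra! hgt
    exact hlt.ne (hsel j ⟨⟨ih, by omega⟩, hmem j⟩ ⟨⟨by omega, hgt⟩, hmem (j + 1)⟩)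

theorem stmt_13_general (F : Set (Set ℕ))
    (hcap : ∀ X ∈ F, ∀ Y ∈ F, X ∩ Y ∈ F)
    (hproper : (∅ : Set ℕ) ∉ F)
    (hcofin : ∀ X : Set ℕ, Xᶜ.Finite → X ∈ F)
    (hp : IsPSet F) (hq : IsQSet F)
    (Z : ℕ → Set ℕ) (hZ : ∀ l, Z l ∈ F) :
    ∃ D ∈ F, ∃ e : ℕ → ℕ, StrictMono e ∧ Set.range e = D ∧ ∀ j, e j ∈ Z j := by
  obtain ⟨C, hCF, hC⟩ := hp (range Z) (range_subset_iff.2 hZ) (countable_range Z)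
  choose b hb using exists_forall_mem_of_finite_diff fun l => hC (Z l) (mem_range_self l)
  obtain ⟨n, hn, hn0, hnb⟩ := exists_strictMono_forall_le_succ b
  obtain ⟨S, hSF, hS⟩ := hq _ (isFinPartition_range_Ico hn hn0)
  set D := C ∩ S ∩ Ici (n 1)
  have hDF : D ∈ F := hcap _ (hcap _ hCF _ hSF) _ (hcofin _ (by simp))
  have hD : D.Infinite := infinite_of_mem hcap hproper hcofin hDF
  have hsel (k : ℕ) : (Ico (n (k + 1)) (n (k + 1 + 1)) ∩ D).Subsingleton :=
    (hS _ (mem_range_self (k + 1))).anti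
      (inter_subset_inter_right _ (inter_subset_left.trans inter_subset_right))
  refine ⟨D, hDF, Nat.nth (· ∈ D), Nat.nth_strictMono hD, Nat.range_nth_of_infinite hD,
    fun j => ?_⟩
  have hle : n (j + 1) ≤ Nat.nth (· ∈ D) j :=
    le_nth_of_subsingleton_inter_Ico (n := fun k => n (k + 1)) hD hsel (fun _ hm => hm.2) j
  exact hb (n j) _ (Nat.nth_mem_of_infinite hD j).1.1 ((hnb j).trans hle) j (hn.id_le j)

theorem stmt_13 (F : Set (Set ℕ))
    (hne : F.Nonempty)
    (hup : ∀ X ∈ F, ∀ Y : Set ℕ, X ⊆ Y → Y ∈ F)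
    (hcap : ∀ X ∈ F, ∀ Y ∈ F, X ∩ Y ∈ F)
    (hproper : (∅ : Set ℕ) ∉ F)
    (hcofin : ∀ X : Set ℕ, Xᶜ.Finite → X ∈ F)
    (hp : IsPSet F) (hq : IsQSet F)
    (Z : ℕ → Set ℕ) (hZ : ∀ l, Z l ∈ F) :
    ∃ D ∈ F, ∃ e : ℕ → ℕ, StrictMono e ∧ Set.range e = D ∧ ∀ j, e j ∈ Z j :=
  stmt_13_general F hcap hproper hcofin hp hq Z hZ
end
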